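/- Let (μ, ω, λ) and (μ̃, ω̃, λ̃) be univariate skew normal parameters (ω, ω̃ > 0), with Δ = ω·λ/√(1+λ²), Γ = ω²/(1+λ²), and analogously Δ̃, Γ̃. Let CF and C̃F denote the corresponding skew normal characteristic functions CF(t) = exp(iμt − t²ω²/2)·(1 + i·ℑ(Δt)) and C̃F(t) = exp(iμ̃t − t²ω̃²/2)·(1 + i·ℑ(Δ̃t)). If Γ ≠ Γ̃, then for every t ∈ ℝ with t ≠ 0, either lim_{c→∞} CF(ct)/C̃F(ct) = 0, or lim_{c→∞} |CF(ct)/C̃F(ct)| = ∞. -/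

import Mathlib

open Filter

noncomputable section

/-- ℑ(x) = ∫₀ˣ √(2/π)·exp(u²/2) du. -/
def ImInt (x : ℝ) : ℝ := ∫ u in (0:ℝ)..x, Real.sqrt (2 / Real.pi) * Real.exp (u ^ 2 / 2)

/-- The skew normal characteristic function of SN(μ, ω, λ),
with Δ = ω·λ/√(1+λ²). -/
def snCF (μ ω lam : ℝ) (t : ℝ) : ℂ :=
  Complex.exp (Complex.I * (μ : ℂ) * (t : ℂ) - ((t ^ 2 * ω ^ 2 / 2 : ℝ) : ℂ)) *
    (1 + Complex.I * ((ImInt (ω * lam / Real.sqrt (1 + lam ^ 2) * t) : ℝ) : ℂ))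

/-! `|CF(t)|² = e^{-Γ t²} S(Δ t)` with `S(x) = e^{-x²} (1 + ℑ(x)²)` (`skewFactor`), because
`ω² = Γ + Δ²`. Comparing `ℑ(x)` with `|x| e^{x²/2}` from above and with `e^{(|x|-1)²/2} / 2`
from below gives `|log S(x)| ≤ 1 + 2|x|`. Hence `log |CF(ct) / C̃F(ct)|² = (Γ̃ - Γ) c² t² + O(c)`,
and the sign of `Γ̃ - Γ` decides between the two limits. -/

open Real

lemma imInt_neg (x : ℝ) : ImInt (-x) = -ImInt x := by
  have h := intervalIntegral.integral_comp_neg (a := x) (b := 0)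
    (fun u : ℝ => √(2 / π) * exp (u ^ 2 / 2))
  simp only [neg_zero, neg_sq] at h
  rw [ImInt, ← h, intervalIntegral.integral_symm, ImInt]

lemma imInt_nonneg {x : ℝ} (hx : 0 ≤ x) : 0 ≤ ImInt x :=
  intervalIntegral.integral_nonneg hx fun _ _ => by positivity

lemma intervalIntegrable_imInt_integrand (a b : ℝ) :
    IntervalIntegrable (fun u : ℝ => √(2 / π) * exp (u ^ 2 / 2)) MeasureTheory.volume a b :=
  (continuous_const.mul (continuous_exp.comp (by fun_prop))).intervalIntegrable a b

lemma sqrt_two_div_pi_le_one : √(2 / π) ≤ 1 :=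
  sqrt_le_one.2 <| (div_le_one pi_pos).2 two_le_pi

lemma half_le_sqrt_two_div_pi : 1 / 2 ≤ √(2 / π) := by
  rw [show (1 / 2 : ℝ) = √(1 / 4) by rw [show (1 / 4 : ℝ) = (1 / 2) ^ 2 by norm_num,
    sqrt_sq (by norm_num)]]
  exact sqrt_le_sqrt <| by rw [div_le_div_iff₀ (by norm_num) pi_pos]; linarith [pi_le_four]

lemma imInt_le {x : ℝ} (hx : 0 ≤ x) : ImInt x ≤ x * exp (x ^ 2 / 2) := by
  calc ImInt x ≤ ∫ _ in (0 : ℝ)..x, exp (x ^ 2 / 2) := by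
        refine intervalIntegral.integral_mono_on hx (intervalIntegrable_imInt_integrand 0 x)
          intervalIntegrable_const fun u hu => ?_
        have : exp (u ^ 2 / 2) ≤ exp (x ^ 2 / 2) := exp_le_exp.2 (by nlinarith [hu.1, hu.2])
        nlinarith [sqrt_two_div_pi_le_one, sqrt_nonneg (2 / π), exp_pos (u ^ 2 / 2)]
    _ = x * exp (x ^ 2 / 2) := by simp

lemma exp_le_imInt {x : ℝ} (hx : 1 ≤ x) : exp ((x - 1) ^ 2 / 2) / 2 ≤ ImInt x := by
  have hsplit := intervalIntegral.integral_add_adjacent_intervals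
    (intervalIntegrable_imInt_integrand 0 (x - 1)) (intervalIntegrable_imInt_integrand (x - 1) x)
  have hhead := imInt_nonneg (x := x - 1) (by linarith)
  have htail : exp ((x - 1) ^ 2 / 2) / 2
      ≤ ∫ u in (x - 1)..x, √(2 / π) * exp (u ^ 2 / 2) := by
    calc exp ((x - 1) ^ 2 / 2) / 2 = ∫ _ in (x - 1)..x, exp ((x - 1) ^ 2 / 2) / 2 := by simp
      _ ≤ _ := by
        refine intervalIntegral.integral_mono_on (by linarith) intervalIntegrable_const
          (intervalIntegrable_imInt_integrand _ _) fun u hu => ?_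
        have : exp ((x - 1) ^ 2 / 2) ≤ exp (u ^ 2 / 2) :=
          exp_le_exp.2 (by nlinarith [hu.1, hu.2])
        nlinarith [half_le_sqrt_two_div_pi, exp_pos ((x - 1) ^ 2 / 2)]
  rw [ImInt, ← hsplit]
  exact le_add_of_nonneg_of_le hhead htail

def snDelta (ω lam : ℝ) : ℝ := ω * lam / √(1 + lam ^ 2)

def snGamma (ω lam : ℝ) : ℝ := ω ^ 2 / (1 + lam ^ 2)

lemma snDelta_sq_add_snGamma (ω lam : ℝ) : snDelta ω lam ^ 2 + snGamma ω lam = ω ^ 2 := by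
  have h : 0 < 1 + lam ^ 2 := by positivity
  rw [snDelta, snGamma, div_pow, mul_pow, sq_sqrt h.le]
  field_simp
  ring

def skewFactor (x : ℝ) : ℝ := exp (-x ^ 2) * (1 + ImInt x ^ 2)

lemma skewFactor_pos (x : ℝ) : 0 < skewFactor x := by
  unfold skewFactor; positivity

lemma skewFactor_abs (x : ℝ) : skewFactor |x| = skewFactor x := by
  rcases abs_choice x with h | h <;> rw [h]
  simp only [skewFactor, neg_sq, imInt_neg]

lemma skewFactor_le_exp {x : ℝ} (hx : 0 ≤ x) : skewFactor x ≤ exp (2 * x) := by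
  have hI : ImInt x ^ 2 ≤ x ^ 2 * exp (x ^ 2) := by
    calc ImInt x ^ 2 ≤ (x * exp (x ^ 2 / 2)) ^ 2 :=
          pow_le_pow_left₀ (imInt_nonneg hx) (imInt_le hx) 2
      _ = x ^ 2 * exp (x ^ 2) := by rw [mul_pow, ← exp_nat_mul]; ring_nf
  calc skewFactor x ≤ exp (-x ^ 2) * (1 + x ^ 2 * exp (x ^ 2)) := by
        unfold skewFactor; gcongr
    _ = exp (-x ^ 2) + x ^ 2 := by rw [mul_add, mul_one, mul_left_comm, ← exp_add]; simp
    _ ≤ 1 + 2 * x + (2 * x) ^ 2 / 2 := by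
        nlinarith [exp_le_one_iff.2 (neg_nonpos.2 (sq_nonneg x))]
    _ ≤ exp (2 * x) := quadratic_le_exp_of_nonneg (by linarith)

lemma exp_le_skewFactor {x : ℝ} (hx : 0 ≤ x) : exp (-(1 + 2 * x)) ≤ skewFactor x := by
  rcases le_total x 1 with hx1 | hx1
  · calc exp (-(1 + 2 * x)) ≤ exp (-x ^ 2) := exp_le_exp.2 (by nlinarith)
      _ ≤ skewFactor x := le_mul_of_one_le_right (exp_pos _).le (by nlinarith)
  · have hI : exp ((x - 1) ^ 2) / 4 ≤ ImInt x ^ 2 := by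
      calc exp ((x - 1) ^ 2) / 4 = (exp ((x - 1) ^ 2 / 2) / 2) ^ 2 := by
            rw [div_pow, ← exp_nat_mul]; ring_nf
        _ ≤ ImInt x ^ 2 := pow_le_pow_left₀ (by positivity) (exp_le_imInt hx1) 2
    have he : 4 ≤ exp 2 := by
      have := add_one_le_exp 1
      rw [show (2 : ℝ) = 1 + 1 by norm_num, exp_add]; nlinarith
    calc exp (-(1 + 2 * x)) ≤ exp (-x ^ 2) * (exp ((x - 1) ^ 2) / 4) := by
          rw [mul_div_assoc', ← exp_add, le_div_iff₀ (by norm_num)]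
          calc exp (-(1 + 2 * x)) * 4 ≤ exp (-(1 + 2 * x)) * exp 2 := by gcongr
            _ = exp (-x ^ 2 + (x - 1) ^ 2) := by rw [← exp_add]; ring_nf
      _ ≤ skewFactor x := by unfold skewFactor; gcongr; linarith

lemma abs_log_skewFactor_le (x : ℝ) : |log (skewFactor x)| ≤ 1 + 2 * |x| := by
  rw [← skewFactor_abs, abs_le, le_log_iff_exp_le (skewFactor_pos _),
    log_le_iff_le_exp (skewFactor_pos _)]
  exact ⟨exp_le_skewFactor (abs_nonneg x),
    (skewFactor_le_exp (abs_nonneg x)).trans (exp_le_exp.2 (by linarith))⟩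

lemma norm_snCF_sq (μ ω lam t : ℝ) :
    ‖snCF μ ω lam t‖ ^ 2 = exp (-(snGamma ω lam * t ^ 2)) * skewFactor (snDelta ω lam * t) := by
  have hre : (Complex.I * μ * t - ((t ^ 2 * ω ^ 2 / 2 : ℝ) : ℂ)).re = -(t ^ 2 * ω ^ 2 / 2) := by
    rw [Complex.sub_re, Complex.ofReal_re]; simp
  have hskew (y : ℝ) : ‖1 + Complex.I * y‖ ^ 2 = 1 + y ^ 2 := by
    rw [Complex.sq_norm, mul_comm, ← Complex.ofReal_one, Complex.normSq_add_mul_I, one_pow]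
  rw [snCF, norm_mul, mul_pow, Complex.norm_exp, hre, ← exp_nat_mul, hskew, skewFactor,
    ← mul_assoc, ← exp_add]
  congr 2
  rw [← snDelta_sq_add_snGamma ω lam]
  ring

lemma norm_snCF_div_eq_exp (μ ω lam μ' ω' lam' t : ℝ) :
    ‖snCF μ ω lam t / snCF μ' ω' lam' t‖ =
      exp (((snGamma ω' lam' - snGamma ω lam) * t ^ 2 +
        (log (skewFactor (snDelta ω lam * t)) - log (skewFactor (snDelta ω' lam' * t)))) / 2) := by
  rw [exp_half, ← sqrt_sq (norm_nonneg _), norm_div, div_pow, norm_snCF_sq, norm_snCF_sq,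
    exp_add, exp_sub, exp_log (skewFactor_pos _), exp_log (skewFactor_pos _), sub_mul, exp_sub,
    exp_neg, exp_neg]
  field_simp

lemma tendsto_mul_sq_add_atTop {α : Type*} {l : Filter α} {s E : α → ℝ} {a b k : ℝ}
    (ha : 0 < a) (hs : Tendsto (fun x => |s x|) l atTop) (hE : ∀ x, |E x| ≤ b * |s x| + k) :
    Tendsto (fun x => a * s x ^ 2 + E x) l atTop := by
  have hlower : Tendsto (fun x => |s x| * (a * |s x| - b) - k) l atTop :=
    tendsto_atTop_add_const_right _ _ <| hs.atTop_mul_atTop₀ <|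
      tendsto_atTop_add_const_right _ _ (hs.const_mul_atTop ha)
  refine tendsto_atTop_mono (fun x => ?_) hlower
  have := (abs_le.1 (hE x)).1
  nlinarith [sq_abs (s x)]

theorem stmt10_general (μ ω lam μ' ω' lam' : ℝ)
    (hΓ : ω ^ 2 / (1 + lam ^ 2) ≠ ω' ^ 2 / (1 + lam' ^ 2)) :
    ∀ t : ℝ, t ≠ 0 →
      Tendsto (fun c : ℝ => snCF μ ω lam (c * t) / snCF μ' ω' lam' (c * t))
        atTop (nhds 0) ∨
      Tendsto (fun c : ℝ => ‖snCF μ ω lam (c * t) / snCF μ' ω' lam' (c * t)‖)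
        atTop atTop := by
  intro t ht
  set E : ℝ → ℝ := fun c =>
    log (skewFactor (snDelta ω lam * (c * t))) - log (skewFactor (snDelta ω' lam' * (c * t)))
  have hs : Tendsto (fun c : ℝ => |c * t|) atTop atTop := by
    simpa only [abs_mul] using tendsto_abs_atTop_atTop.atTop_mul_const (abs_pos.2 ht)
  have hE (c : ℝ) : |E c| ≤ 2 * (|snDelta ω lam| + |snDelta ω' lam'|) * |c * t| + 2 := by
    have h := abs_log_skewFactor_le (snDelta ω lam * (c * t))
    have h' := abs_log_skewFactor_le (snDelta ω' lam' * (c * t))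
    rw [abs_mul] at h h'
    linarith [abs_sub (log (skewFactor (snDelta ω lam * (c * t))))
      (log (skewFactor (snDelta ω' lam' * (c * t))))]
  have hΓ' : snGamma ω' lam' - snGamma ω lam ≠ 0 := sub_ne_zero.2 hΓ.symm
  rcases hΓ'.lt_or_gt with hneg | hpos
  · left
    rw [tendsto_zero_iff_norm_tendsto_zero]
    simp_rw [norm_snCF_div_eq_exp]
    refine tendsto_exp_atBot.comp (Tendsto.atBot_div_const two_pos ?_)
    have := tendsto_mul_sq_add_atTop (neg_pos.2 hneg) hs (E := fun c => -E c)
      (fun c => by rw [abs_neg]; exact hE c)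
    exact (tendsto_neg_atTop_atBot.comp this).congr fun c => by simp only [Function.comp, E]; ring
  · right
    simp_rw [norm_snCF_div_eq_exp]
    exact tendsto_exp_atTop.comp ((tendsto_mul_sq_add_atTop hpos hs hE).atTop_div_const two_pos)

theorem stmt10 (μ ω lam μ' ω' lam' : ℝ) (hω : 0 < ω) (hω' : 0 < ω')
    (hΓ : ω ^ 2 / (1 + lam ^ 2) ≠ ω' ^ 2 / (1 + lam' ^ 2)) :
    ∀ t : ℝ, t ≠ 0 →
      Tendsto (fun c : ℝ => snCF μ ω lam (c * t) / snCF μ' ω' lam' (c * t))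
        atTop (nhds 0) ∨
      Tendsto (fun c : ℝ => ‖snCF μ ω lam (c * t) / snCF μ' ω' lam' (c * t)‖)
        atTop atTop :=
  stmt10_general μ ω lam μ' ω' lam' hΓ
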